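/- arXiv:2103.12552 — 7 statements merged into one kernel-verified Lean document; each statement's English description precedes it below -/
import Mathlib

section
/- Let V₁, V₂, W₁, W₂ be subsets of matrix spaces over a field F such that the spans satisfy dim⟨V₁⟩ = dim⟨V₂⟩ ≥ max(dim⟨W₁⟩, dim⟨W₂⟩), products AB are well-defined square matrices for (A,B) in (V₁×V₂) ∪ (W₁×W₂), and the trace pairing on ⟨V₁⟩×⟨V₂⟩ is nondegenerate in the first argument (i.e. if A ∈ ⟨V₁⟩ satisfies tr(AB)=0 for all B ∈ ⟨V₂⟩ then A=0). If maps φ: V₁→W₁ and ψ: V₂→W₂ satisfy tr(φ(A)ψ(B)) = tr(AB) for all A ∈ V₁, B ∈ V₂, then dim⟨V₁⟩ = dim⟨V₂⟩ = dim⟨W₁⟩ = dim⟨W₂⟩ and φ, ψ extend to bijective linear maps ⟨V₁⟩→⟨W₁⟩ and ⟨V₂⟩→⟨W₂⟩ satisfying the same trace identity on the spans. -/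
/-!
Extend φ and ψ linearly from bases of ⟨V₁⟩ and ⟨V₂⟩ chosen inside V₁ and V₂; bilinearity carries
the trace identity over to the spans. A pairing that is nondegenerate on the left between spaces
of equal dimension is nondegenerate on both sides, so the trace identity forces both extensions
to be injective. Their images lie in ⟨W₁⟩ and ⟨W₂⟩, which have no larger dimension, so they are
onto. Finally, for A ∈ V₁ the preimage of φ A ∈ ⟨W₁⟩ pairs with the chosen basis of ⟨V₂⟩ exactly
as A does, so it is A.
-/

open Module Submodule Set Function

namespace LinearMap

variable {K M₁ M₂ N₁ N₂ : Type*} [Field K] [AddCommGroup M₁] [Module K M₁]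
  [AddCommGroup M₂] [Module K M₂] [AddCommGroup N₁] [Module K N₁] [AddCommGroup N₂] [Module K N₂]
  {B : M₁ →ₗ[K] M₂ →ₗ[K] K}

theorem SeparatingLeft.separatingRight_of_finrank_eq [FiniteDimensional K M₁]
    [FiniteDimensional K M₂] (hB : B.SeparatingLeft) (h : finrank K M₁ = finrank K M₂) :
    B.SeparatingRight := by
  rw [separatingLeft_iff_ker_eq_bot, ker_eq_bot] at hB
  rw [separatingRight_iff_flip_ker_eq_bot, ker_eq_bot, flip_injective_iff₂]
  exact (injective_iff_surjective_of_finrank_eq_finrank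
    (by rw [Subspace.dual_finrank_eq, h])).mp hB

variable {C : N₁ →ₗ[K] N₂ →ₗ[K] K} {Φ : M₁ →ₗ[K] N₁} {Ψ : M₂ →ₗ[K] N₂}

theorem SeparatingLeft.injective_of_pairing (hB : B.SeparatingLeft)
    (hpair : ∀ x y, C (Φ x) (Ψ y) = B x y) : Injective Φ := by
  refine (injective_iff_map_eq_zero Φ).mpr fun x hx => hB x fun y => ?_
  rw [← hpair, hx, map_zero, zero_apply]

theorem SeparatingLeft.apply_eq_of_pairing (hB : B.SeparatingLeft)
    (hpair : ∀ x y, C (Φ x) (Ψ y) = B x y) {s : Set M₂} (hs : span K s = ⊤) {x : M₁} {z : N₁}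
    (hz : z ∈ range Φ) (h : ∀ y ∈ s, C z (Ψ y) = B x y) : Φ x = z := by
  obtain ⟨x', rfl⟩ := hz
  have : B x' = B x := ext_on hs fun y hy => by rw [← hpair, h y hy]
  rw [ker_eq_bot.mp (separatingLeft_iff_ker_eq_bot.mp hB) this]

theorem SeparatingLeft.injective_range_eq_eqOn_of_pairing [FiniteDimensional K N₁]
    (hB : B.SeparatingLeft)
    (hpair : ∀ x y, C (Φ x) (Ψ y) = B x y) {S₁ s₁ : Set M₁} {S₂ s₂ : Set M₂}
    {f : M₁ → N₁} {g : M₂ → N₂} (htr : ∀ x ∈ S₁, ∀ y ∈ S₂, C (f x) (g y) = B x y)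
    (hs₁ : span K s₁ = ⊤) (hs₁S : s₁ ⊆ S₁) (hΦ : EqOn Φ f s₁)
    (hs₂ : span K s₂ = ⊤) (hs₂S : s₂ ⊆ S₂) (hΨ : EqOn Ψ g s₂)
    {W : Submodule K N₁} (hf : MapsTo f S₁ W) (hW : finrank K W ≤ finrank K M₁) :
    Injective Φ ∧ range Φ = W ∧ EqOn Φ f S₁ := by
  have hinj := hB.injective_of_pairing hpair
  have hrange : range Φ = W := by
    refine eq_of_le_of_finrank_le ?_ (by rwa [finrank_range_of_inj hinj])
    rw [range_eq_map, ← hs₁, map_span, span_le]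
    rintro _ ⟨x, hx, rfl⟩
    exact hΦ hx ▸ hf (hs₁S hx)
  refine ⟨hinj, hrange, fun x hx => hB.apply_eq_of_pairing hpair hs₂ (hrange ▸ hf hx) ?_⟩
  intro y hy
  rw [hΨ hy, htr x hx y (hs₂S hy)]

theorem exists_linearMap_eqOn_of_top_le_span {S : Set M₁} (hS : ⊤ ≤ span K S) (f : M₁ → N₁) :
    ∃ s ⊆ S, span K s = ⊤ ∧ ∃ Φ : M₁ →ₗ[K] N₁, EqOn Φ f s :=
  let b := Basis.ofSpan hS
  ⟨Set.range b, Basis.ofSpan_subset hS, b.span_eq, b.constr K (f ∘ b), by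
    rintro _ ⟨i, rfl⟩
    exact b.constr_basis K _ i⟩

end LinearMap

open LinearMap in
theorem exists_linearMap_span_of_pairing {K E₁ E₂ G₁ G₂ : Type*} [Field K]
    [AddCommGroup E₁] [Module K E₁] [AddCommGroup E₂] [Module K E₂]
    [AddCommGroup G₁] [Module K G₁] [AddCommGroup G₂] [Module K G₂]
    [FiniteDimensional K E₁] [FiniteDimensional K E₂]
    [FiniteDimensional K G₁] [FiniteDimensional K G₂]
    (B : E₁ →ₗ[K] E₂ →ₗ[K] K) (C : G₁ →ₗ[K] G₂ →ₗ[K] K)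
    {V₁ : Set E₁} {V₂ : Set E₂} {W₁ : Set G₁} {W₂ : Set G₂}
    (hdim : finrank K (span K V₁) = finrank K (span K V₂))
    (hW₁ : finrank K (span K W₁) ≤ finrank K (span K V₁))
    (hW₂ : finrank K (span K W₂) ≤ finrank K (span K V₂))
    (hB : (B.domRestrict₁₂ (span K V₁) (span K V₂)).SeparatingLeft)
    {φ : E₁ → G₁} {ψ : E₂ → G₂} (hφ : MapsTo φ V₁ W₁) (hψ : MapsTo ψ V₂ W₂)
    (htr : ∀ v ∈ V₁, ∀ w ∈ V₂, C (φ v) (ψ w) = B v w) :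
    ∃ (Φ : span K V₁ →ₗ[K] G₁) (Ψ : span K V₂ →ₗ[K] G₂),
      Injective Φ ∧ Injective Ψ ∧
      LinearMap.range Φ = span K W₁ ∧ LinearMap.range Ψ = span K W₂ ∧
      (∀ v (hv : v ∈ V₁), Φ ⟨v, subset_span hv⟩ = φ v) ∧
      (∀ w (hw : w ∈ V₂), Ψ ⟨w, subset_span hw⟩ = ψ w) ∧
      ∀ x y, C (Φ x) (Ψ y) = B x y := by
  obtain ⟨s₁, hs₁V, hs₁, Φ, hΦ⟩ :=
    exists_linearMap_eqOn_of_top_le_span (span_span_coe_preimage (R := K) (s := V₁)).ge (φ ∘ (↑))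
  obtain ⟨s₂, hs₂V, hs₂, Ψ, hΨ⟩ :=
    exists_linearMap_eqOn_of_top_le_span (span_span_coe_preimage (R := K) (s := V₂)).ge (ψ ∘ (↑))
  have htr' : ∀ x ∈ Subtype.val ⁻¹' V₁, ∀ y ∈ Subtype.val ⁻¹' V₂,
      C ((φ ∘ (↑)) x) ((ψ ∘ (↑)) y) = B.domRestrict₁₂ (span K V₁) (span K V₂) x y :=
    fun x hx y hy => htr x hx y hy
  have hpair : ∀ x y, C (Φ x) (Ψ y) = B.domRestrict₁₂ (span K V₁) (span K V₂) x y :=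
    congr_fun₂ <| show C.compl₁₂ Φ Ψ = _ from
      ext_on hs₁ fun x hx => ext_on hs₂ fun y hy => by
        simp only [compl₁₂_apply, hΦ hx, hΨ hy, htr' x (hs₁V hx) y (hs₂V hy)]
  obtain ⟨hΦinj, hΦrange, hΦφ⟩ := hB.injective_range_eq_eqOn_of_pairing hpair htr'
    hs₁ hs₁V hΦ hs₂ hs₂V hΨ (fun x hx => subset_span (hφ hx)) hW₁
  have hBflip : (B.domRestrict₁₂ (span K V₁) (span K V₂)).flip.SeparatingLeft :=
    flip_separatingLeft.mpr (hB.separatingRight_of_finrank_eq hdim)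
  obtain ⟨hΨinj, hΨrange, hΨψ⟩ := hBflip.injective_range_eq_eqOn_of_pairing (C := C.flip)
    (fun y x => hpair x y) (fun y hy x hx => htr' x hx y hy)
    hs₂ hs₂V hΨ hs₁ hs₁V hΦ (fun y hy => subset_span (hψ hy)) hW₂
  exact ⟨Φ, Ψ, hΦinj, hΨinj, hΦrange, hΨrange, fun v hv => hΦφ hv, fun w hw => hΨψ hw, hpair⟩

open Matrix

theorem stmt0 {F : Type*} [Field F] {a b c d : ℕ}
    (V₁ : Set (Matrix (Fin a) (Fin b) F)) (V₂ : Set (Matrix (Fin b) (Fin a) F))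
    (W₁ : Set (Matrix (Fin c) (Fin d) F)) (W₂ : Set (Matrix (Fin d) (Fin c) F))
    (hdim1 : Module.finrank F (Submodule.span F V₁) = Module.finrank F (Submodule.span F V₂))
    (hdim2 : Module.finrank F (Submodule.span F W₁) ≤ Module.finrank F (Submodule.span F V₁))
    (hdim3 : Module.finrank F (Submodule.span F W₂) ≤ Module.finrank F (Submodule.span F V₁))
    (hnd : ∀ A ∈ Submodule.span F V₁,
      (∀ B ∈ Submodule.span F V₂, Matrix.trace (A * B) = 0) → A = 0)
    (φ : Matrix (Fin a) (Fin b) F → Matrix (Fin c) (Fin d) F)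
    (ψ : Matrix (Fin b) (Fin a) F → Matrix (Fin d) (Fin c) F)
    (hφ : Set.MapsTo φ V₁ W₁) (hψ : Set.MapsTo ψ V₂ W₂)
    (htr : ∀ A ∈ V₁, ∀ B ∈ V₂, Matrix.trace (φ A * ψ B) = Matrix.trace (A * B)) :
    Module.finrank F (Submodule.span F V₁) = Module.finrank F (Submodule.span F W₁) ∧
    Module.finrank F (Submodule.span F V₂) = Module.finrank F (Submodule.span F W₂) ∧
    ∃ (Φ : Submodule.span F V₁ →ₗ[F] Matrix (Fin c) (Fin d) F)
      (Ψ : Submodule.span F V₂ →ₗ[F] Matrix (Fin d) (Fin c) F),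
      Function.Injective Φ ∧ Function.Injective Ψ ∧
      Set.range Φ = (Submodule.span F W₁ : Set (Matrix (Fin c) (Fin d) F)) ∧
      Set.range Ψ = (Submodule.span F W₂ : Set (Matrix (Fin d) (Fin c) F)) ∧
      (∀ A (hA : A ∈ V₁), Φ ⟨A, Submodule.subset_span hA⟩ = φ A) ∧
      (∀ B (hB : B ∈ V₂), Ψ ⟨B, Submodule.subset_span hB⟩ = ψ B) ∧
      ∀ (x : Submodule.span F V₁) (y : Submodule.span F V₂),
        Matrix.trace (Φ x * Ψ y) =
          Matrix.trace ((x : Matrix (Fin a) (Fin b) F) * (y : Matrix (Fin b) (Fin a) F)) := by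
  obtain ⟨Φ, Ψ, hΦ, hΨ, hΦW, hΨW, hΦφ, hΨψ, hpair⟩ := exists_linearMap_span_of_pairing
    ((mulLinearMap F).compr₂ (traceLinearMap (Fin a) F F))
    ((mulLinearMap F).compr₂ (traceLinearMap (Fin c) F F)) hdim1 hdim2 (hdim1 ▸ hdim3)
    (fun x hx => Subtype.ext (hnd x x.2 fun B hB => hx ⟨B, hB⟩)) hφ hψ htr
  refine ⟨?_, ?_, Φ, Ψ, hΦ, hΨ, ?_, ?_, hΦφ, hΨψ, hpair⟩
  · rw [← hΦW, LinearMap.finrank_range_of_inj hΦ]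
  · rw [← hΨW, LinearMap.finrank_range_of_inj hΨ]
  · rw [← hΦW, LinearMap.coe_range]
  · rw [← hΨW, LinearMap.coe_range]
end

section
/- Let V₁, V₂, W₁, W₂ be subsets of matrix spaces over a field F with dim⟨V₁⟩ = dim⟨V₂⟩, where products AB are well-defined square matrices for (A,B) in (V₁×V₂) ∪ (W₁×W₂), and if A ∈ ⟨V₁⟩ satisfies tr(AB)=0 for all B ∈ ⟨V₂⟩ then A=0. If linear maps φ: V₁→W₁ and ψ: V₂→W₂ satisfy tr(φ(A)ψ(B)) = tr(AB) for all A ∈ V₁, B ∈ V₂, then dim⟨V₁⟩ = dim⟨V₂⟩ ≤ min(dim⟨W₁⟩, dim⟨W₂⟩), and φ, ψ extend to injective linear maps ⟨V₁⟩→⟨W₁⟩ and ⟨V₂⟩→⟨W₂⟩ preserving trace of products. -/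
/-!
A map that is linear on a set `V` extends to a linear map on `⟨V⟩`: define it on a basis of
`⟨V⟩` chosen inside `V`. The trace identity holds on generators, hence by bilinearity on all of
`⟨V₁⟩ × ⟨V₂⟩`. The trace pairing `⟨V₁⟩ × ⟨V₂⟩ → F` is nondegenerate on the left and
`dim ⟨V₁⟩ = dim ⟨V₂⟩`, so it is nondegenerate on both sides, which forces both extensions to be
injective; their images lie in `⟨W₁⟩` and `⟨W₂⟩`, giving the dimension bounds.
-/

open Matrix Submodule Function Module

section LinearOnSet

variable {F M N : Type*} [Field F] [AddCommGroup M] [Module F M] [AddCommGroup N] [Module F N]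

variable (F) in
def IsLinearOn (V : Set M) (φ : M → N) : Prop :=
  ∀ (k : ℕ) (cs : Fin k → F) (v : Fin k → M),
    (∀ i, v i ∈ V) → (∑ i, cs i • v i) ∈ V → φ (∑ i, cs i • v i) = ∑ i, cs i • φ (v i)

theorem IsLinearOn.map_sum {V : Set M} {φ : M → N} (h : IsLinearOn F V φ) {ι : Type*} [Fintype ι]
    (c : ι → F) (v : ι → M) (hv : ∀ i, v i ∈ V) (hsum : ∑ i, c i • v i ∈ V) :
    φ (∑ i, c i • v i) = ∑ i, c i • φ (v i) := by
  let e := (Fintype.equivFin ι).symm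
  simp only [← e.sum_comp] at hsum ⊢
  exact h _ (c ∘ e) (v ∘ e) (fun i => hv (e i)) hsum

theorem IsLinearOn.exists_linearMap_span {V : Set M} {φ : M → N} (h : IsLinearOn F V φ) :
    ∃ Φ : span F V →ₗ[F] N, ∀ A (hA : A ∈ V), Φ ⟨A, subset_span hA⟩ = φ A := by
  obtain ⟨b, hbV, hbspan, hli⟩ := exists_linearIndependent F V
  let B : Basis b F (span F V) :=
    (Basis.span hli).map (LinearEquiv.ofEq _ _ (by rw [Subtype.range_coe, hbspan]))
  have hB : ∀ i, (B i : M) = i := fun i => by simp [B, Basis.span_apply]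
  refine ⟨B.constr F fun i => φ i, fun A hA => ?_⟩
  set l := B.repr ⟨A, subset_span hA⟩
  have hA_eq : A = ∑ i : l.support, l i • (i : M) := by
    have := congrArg Subtype.val (B.linearCombination_repr ⟨A, subset_span hA⟩)
    rw [Finset.sum_coe_sort l.support fun i => l i • (i : M)]
    simpa [Finsupp.linearCombination_apply, Finsupp.sum, hB] using this.symm
  have hφA :=
    h.map_sum (fun i : l.support => l i) (fun i => i.1.1) (fun i => hbV i.1.2) (hA_eq ▸ hA)
  rw [← hA_eq] at hφA
  rw [Basis.constr_apply, Finsupp.sum, ← Finset.sum_coe_sort, hφA]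

end LinearOnSet

section SpanGenerators

variable {F M N P : Type*} [Field F] [AddCommGroup M] [Module F M] [AddCommGroup N] [Module F N]
  [AddCommGroup P] [Module F P]

theorem LinearMap.ext_span {V : Set M} {f g : span F V →ₗ[F] N}
    (h : ∀ A (hA : A ∈ V), f ⟨A, subset_span hA⟩ = g ⟨A, subset_span hA⟩) : f = g :=
  LinearMap.ext_on span_span_coe_preimage fun x hx => h x hx

theorem LinearMap.ext_span₂ {V₁ : Set M} {V₂ : Set N} {f g : span F V₁ →ₗ[F] span F V₂ →ₗ[F] P}
    (h : ∀ A (hA : A ∈ V₁) B (hB : B ∈ V₂),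
      f ⟨A, subset_span hA⟩ ⟨B, subset_span hB⟩ = g ⟨A, subset_span hA⟩ ⟨B, subset_span hB⟩) :
    f = g :=
  LinearMap.ext_span fun A hA => LinearMap.ext_span fun B hB => h A hA B hB

theorem LinearMap.range_le_of_span {V : Set M} (f : span F V →ₗ[F] N) {W : Submodule F N}
    (h : ∀ A (hA : A ∈ V), f ⟨A, subset_span hA⟩ ∈ W) : LinearMap.range f ≤ W := by
  rw [LinearMap.range_eq_map, ← span_span_coe_preimage, map_span_le]
  exact fun x hx => h x hx

end SpanGenerators

section Pairing

variable {F M₁ M₂ N₁ N₂ : Type*} [Field F] [AddCommGroup M₁] [Module F M₁] [AddCommGroup M₂]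
  [Module F M₂] [AddCommGroup N₁] [Module F N₁] [AddCommGroup N₂] [Module F N₂]

theorem LinearMap.injective_of_pairing_eq {B : M₁ →ₗ[F] M₂ →ₗ[F] F} {B' : N₁ →ₗ[F] N₂ →ₗ[F] F}
    (hB : Injective B) {Φ : M₁ →ₗ[F] N₁} {Ψ : M₂ →ₗ[F] N₂} (h : ∀ x y, B' (Φ x) (Ψ y) = B x y) :
    Injective Φ := by
  rw [← LinearMap.ker_eq_bot, LinearMap.ker_eq_bot']
  refine fun x hx => hB ?_
  ext y
  simp [← h, hx]

theorem LinearMap.injective_flip_of_finrank_eq [FiniteDimensional F M₁] [FiniteDimensional F M₂]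
    {B : M₁ →ₗ[F] M₂ →ₗ[F] F} (hB : Injective B) (hdim : finrank F M₁ = finrank F M₂) :
    Injective B.flip :=
  LinearMap.flip_injective_iff₂.mpr <|
    (LinearMap.injective_iff_surjective_of_finrank_eq_finrank
      (by rw [Subspace.dual_finrank_eq, hdim])).mp hB

end Pairing

def Matrix.traceMulForm (R : Type*) [CommSemiring R] (m n : Type*) [Fintype m] [Fintype n] :
    Matrix m n R →ₗ[R] Matrix n m R →ₗ[R] R :=
  (mulLinearMap R).compr₂ (traceLinearMap m R R)

@[simp]
theorem Matrix.traceMulForm_apply {R : Type*} [CommSemiring R] {m n : Type*} [Fintype m]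
    [Fintype n] (A : Matrix m n R) (B : Matrix n m R) : traceMulForm R m n A B = trace (A * B) :=
  rfl

theorem stmt1 {F : Type*} [Field F] {a b c d : ℕ}
    (V₁ : Set (Matrix (Fin a) (Fin b) F)) (V₂ : Set (Matrix (Fin b) (Fin a) F))
    (W₁ : Set (Matrix (Fin c) (Fin d) F)) (W₂ : Set (Matrix (Fin d) (Fin c) F))
    (hdim1 : Module.finrank F (Submodule.span F V₁) = Module.finrank F (Submodule.span F V₂))
    (hnd : ∀ A ∈ Submodule.span F V₁,
      (∀ B ∈ Submodule.span F V₂, Matrix.trace (A * B) = 0) → A = 0)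
    (φ : Matrix (Fin a) (Fin b) F → Matrix (Fin c) (Fin d) F)
    (ψ : Matrix (Fin b) (Fin a) F → Matrix (Fin d) (Fin c) F)
    (hφ : Set.MapsTo φ V₁ W₁) (hψ : Set.MapsTo ψ V₂ W₂)
    (hφlin : ∀ (k : ℕ) (cs : Fin k → F) (v : Fin k → Matrix (Fin a) (Fin b) F),
      (∀ i, v i ∈ V₁) → (∑ i, cs i • v i) ∈ V₁ →
        φ (∑ i, cs i • v i) = ∑ i, cs i • φ (v i))
    (hψlin : ∀ (k : ℕ) (cs : Fin k → F) (v : Fin k → Matrix (Fin b) (Fin a) F),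
      (∀ i, v i ∈ V₂) → (∑ i, cs i • v i) ∈ V₂ →
        ψ (∑ i, cs i • v i) = ∑ i, cs i • ψ (v i))
    (htr : ∀ A ∈ V₁, ∀ B ∈ V₂, Matrix.trace (φ A * ψ B) = Matrix.trace (A * B)) :
    Module.finrank F (Submodule.span F V₁) ≤ Module.finrank F (Submodule.span F W₁) ∧
    Module.finrank F (Submodule.span F V₂) ≤ Module.finrank F (Submodule.span F W₂) ∧
    ∃ (Φ : Submodule.span F V₁ →ₗ[F] Matrix (Fin c) (Fin d) F)
      (Ψ : Submodule.span F V₂ →ₗ[F] Matrix (Fin d) (Fin c) F),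
      Function.Injective Φ ∧ Function.Injective Ψ ∧
      (∀ x : Submodule.span F V₁, Φ x ∈ Submodule.span F W₁) ∧
      (∀ y : Submodule.span F V₂, Ψ y ∈ Submodule.span F W₂) ∧
      (∀ A (hA : A ∈ V₁), Φ ⟨A, Submodule.subset_span hA⟩ = φ A) ∧
      (∀ B (hB : B ∈ V₂), Ψ ⟨B, Submodule.subset_span hB⟩ = ψ B) ∧
      ∀ (x : Submodule.span F V₁) (y : Submodule.span F V₂),
        Matrix.trace (Φ x * Ψ y) =
          Matrix.trace ((x : Matrix (Fin a) (Fin b) F) * (y : Matrix (Fin b) (Fin a) F)) := by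
  obtain ⟨Φ, hΦ⟩ := IsLinearOn.exists_linearMap_span hφlin
  obtain ⟨Ψ, hΨ⟩ := IsLinearOn.exists_linearMap_span hψlin
  set T := (traceMulForm F (Fin a) (Fin b)).compl₁₂ (span F V₁).subtype (span F V₂).subtype
  have hT : Injective T := by
    rw [← LinearMap.ker_eq_bot, LinearMap.ker_eq_bot']
    exact fun x hx => Subtype.ext <| hnd x x.2 fun y hy => LinearMap.congr_fun hx ⟨y, hy⟩
  have hpair : ∀ x y, traceMulForm F (Fin c) (Fin d) (Φ x) (Ψ y) = T x y :=
    LinearMap.congr_fun₂ <| LinearMap.ext_span₂ (f := (traceMulForm F _ _).compl₁₂ Φ Ψ)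
      fun A hA B hB => by simp [T, hΦ A hA, hΨ B hB, htr A hA B hB]
  have hΦinj := LinearMap.injective_of_pairing_eq hT hpair
  have hΨinj := LinearMap.injective_of_pairing_eq (B' := (traceMulForm F _ _).flip)
    (LinearMap.injective_flip_of_finrank_eq hT hdim1) fun y x => hpair x y
  have hΦW := Φ.range_le_of_span fun A hA => hΦ A hA ▸ subset_span (hφ hA)
  have hΨW := Ψ.range_le_of_span fun B hB => hΨ B hB ▸ subset_span (hψ hB)
  refine ⟨?_, ?_, Φ, Ψ, hΦinj, hΨinj, fun x => hΦW ⟨x, rfl⟩, fun y => hΨW ⟨y, rfl⟩, hΦ, hΨ, hpair⟩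
  · exact (LinearMap.finrank_range_of_inj hΦinj).symm.trans_le (finrank_mono hΦW)
  · exact (LinearMap.finrank_range_of_inj hΨinj).symm.trans_le (finrank_mono hΨW)
end

section
/- Let m ≥ 3 and n ≥ 1. Maps φ₁,…,φ_m: M_n → M_n satisfy tr(φ₁(A₁)⋯φ_m(A_m)) = tr(A₁⋯A_m) for all A₁,…,A_m ∈ M_n if and only if there exist invertible matrices N₁,…,N_m ∈ M_n (with N_{m+1} := N₁) such that φᵢ(A) = Nᵢ A N_{i+1}^{-1} for all A ∈ M_n and all i = 1,…,m. -/
/-!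
Rotating the cycle so that slot `i` comes first, the identity reads `tr (φᵢ A * X) = tr (A * Y)`,
where `Y` runs over all matrices while `X` runs over the products of the other `φⱼ`. A dimension
count shows that these `X` span `M_n`, so nondegeneracy of the trace form makes every `φᵢ` linear
and injective, and with two free slots (`m ≥ 3`) it gives
`φᵢ A * φᵢ₊₁ B = φᵢ (A * B) * φᵢ₊₁ 1 = φᵢ 1 * φᵢ₊₁ (A * B)`.
Hence every `φᵢ 1` is invertible and `A ↦ φ₀ A * (φ₀ 1)⁻¹` is an algebra automorphism of `M_n`,
inner by Skolem–Noether; the relation `φᵢ₊₁ A = (φᵢ 1)⁻¹ * φᵢ A * φᵢ₊₁ 1` then propagates the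
form `Nᵢ * A * Nᵢ₊₁⁻¹` along the cycle. It closes up (`N_m = N₀`) because the product of the `φᵢ`
telescopes to `N₀ * (A₁ ⋯ A_m) * N_m⁻¹`, whose trace must be `tr (A₁ ⋯ A_m)`.
-/

open Matrix Fin.NatCast

theorem List.prod_ofFn_units_mul_mul_inv {M : Type*} [Monoid M] (N : ℕ → Mˣ) {s : ℕ}
    (A : Fin s → M) :
    (List.ofFn fun j : Fin s => N j * A j * ↑(N ((j : ℕ) + 1))⁻¹).prod
      = N 0 * (List.ofFn A).prod * ↑(N s)⁻¹ := by
  induction s with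
  | zero => simp
  | succ s ih =>
    simp only [List.ofFn_succ', List.concat_eq_append, List.prod_append, List.prod_singleton,
      Fin.val_castSucc, Fin.val_last, ih]
    simp [mul_assoc]

theorem List.surjective_prod_ofFn {M : Type*} [Monoid M] {s : ℕ} :
    Function.Surjective fun T : Fin (s + 1) → M => (List.ofFn T).prod :=
  fun B => ⟨Fin.cons B 1, by simp [List.ofFn_succ]⟩

theorem isUnit_apply_one_of_mul_eq {M : Type*} [Monoid M] [IsDedekindFiniteMonoid M]
    {f g : M → M} (hf : Function.Surjective f) (hg : Function.Surjective g)
    (h : ∀ A B, f A * g B = f 1 * g (A * B)) : IsUnit (f 1) := by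
  obtain ⟨A, hA⟩ := hf 1
  obtain ⟨B, hB⟩ := hg 1
  exact .of_mul_eq_one (g (A * B)) (by rw [← h, hA, hB, one_mul])

theorem exists_nat_units_conj_of_step {M : Type*} [Monoid M] {m : ℕ} [NeZero m]
    {φ : Fin m → M → M} (b : Fin m → Mˣ) (S : Mˣ) (h0 : ∀ A, φ 0 A = S * A * ↑S⁻¹ * b 0)
    (hstep : ∀ i A, φ i A * b (i + 1) = b i * φ (i + 1) A) :
    ∃ N : ℕ → Mˣ, ∀ (i : Fin m) A, φ i A = N i * A * ↑(N ((i : ℕ) + 1))⁻¹ := by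
  obtain ⟨N, hN0, hNsucc⟩ : ∃ N : ℕ → Mˣ, N 0 = S ∧ ∀ r, N (r + 1) = (b r)⁻¹ * N r :=
    ⟨fun r => Nat.rec S (fun j Nj => (b j)⁻¹ * Nj) r, rfl, fun _ => rfl⟩
  have hN (r : ℕ) A : φ r A = N r * A * ↑(N r)⁻¹ * b r := by
    induction r generalizing A with
    | zero => simpa [hN0] using h0 A
    | succ r ih =>
      calc φ (r + 1 : ℕ) A = ↑(b r)⁻¹ * (b r * φ ((r : Fin m) + 1) A) := by simp
        _ = ↑(b r)⁻¹ * (φ r A * b ((r : Fin m) + 1)) := by rw [hstep]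
        _ = N (r + 1) * A * ↑(N (r + 1))⁻¹ * b (r + 1 : ℕ) := by simp [hNsucc, ih, mul_assoc]
  refine ⟨N, fun i A => ?_⟩
  simpa [hNsucc, mul_assoc] using hN i A

namespace Matrix

section Field

variable {K ι : Type*} [Field K] [Fintype ι]

theorem eq_of_trace_mul_eq_of_span_eq_top {α : Type*} {g : α → Matrix ι ι K}
    (hg : Submodule.span K (Set.range g) = ⊤) {X Y : Matrix ι ι K}
    (h : ∀ t, trace (X * g t) = trace (Y * g t)) : X = Y := by
  have := LinearMap.ext_on_range hg (f := traceLinearMap ι K K ∘ₗ LinearMap.mulLeft K X)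
    (g := traceLinearMap ι K K ∘ₗ LinearMap.mulLeft K Y) (by simpa using h)
  exact ext_iff_trace_mul_right.2 fun Z => by simpa using LinearMap.congr_fun this Z

section TracePairing

variable {α : Type*} {f : Matrix ι ι K → Matrix ι ι K} {g h : α → Matrix ι ι K}

theorem span_range_eq_top_of_trace_mul_eq (hh : Function.Surjective h)
    (H : ∀ A t, trace (f A * g t) = trace (A * h t)) : Submodule.span K (Set.range g) = ⊤ := by
  set Φ := Finsupp.linearCombination K g
  set Ψ := Finsupp.linearCombination K h
  have hpair A c : trace (f A * Φ c) = trace (A * Ψ c) := by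
    simp [Φ, Ψ, Finsupp.linearCombination_apply, Finsupp.sum, Finset.mul_sum, trace_sum, H]
  obtain ⟨σ, hσ⟩ := Ψ.exists_rightInverse_of_surjective (by
    rw [Finsupp.range_linearCombination, hh.range_eq, Submodule.span_univ])
  have hsec A Z : trace (f A * Φ (σ Z)) = trace (A * Z) := by
    rw [hpair, ← LinearMap.comp_apply Ψ σ, hσ, LinearMap.id_apply]
  have hinj : Function.Injective (Φ ∘ₗ σ) := fun Y Y' hY =>
    ext_iff_trace_mul_left.2 fun A => by
      rw [← hsec A Y, ← hsec A Y']
      exact congrArg (fun X => trace (f A * X)) hY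
  rw [← Finsupp.range_linearCombination, LinearMap.range_eq_top]
  exact Function.Surjective.of_comp (g := σ) (LinearMap.injective_iff_surjective.mp hinj)

theorem isLinearMap_of_trace_mul_eq (hh : Function.Surjective h)
    (H : ∀ A t, trace (f A * g t) = trace (A * h t)) : IsLinearMap K f := by
  have hg := span_range_eq_top_of_trace_mul_eq hh H
  constructor
  · intro A B
    exact eq_of_trace_mul_eq_of_span_eq_top hg fun t => by simp [add_mul, H]
  · intro c A
    exact eq_of_trace_mul_eq_of_span_eq_top hg fun t => by simp [H]

theorem injective_of_trace_mul_eq (hh : Function.Surjective h)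
    (H : ∀ A t, trace (f A * g t) = trace (A * h t)) : Function.Injective f := fun A B hAB =>
  ext_iff_trace_mul_right.2 fun Y => by
    obtain ⟨t, rfl⟩ := hh Y
    rw [← H, hAB, H]

end TracePairing

variable [DecidableEq ι]

theorem exists_units_conj_of_algEquiv (e : Matrix ι ι K ≃ₐ[K] Matrix ι ι K) :
    ∃ S : (Matrix ι ι K)ˣ, ∀ A, e A = S * A * (↑S⁻¹ : Matrix ι ι K) := by
  obtain ⟨T, hT⟩ := (toLinAlgEquiv'.symm.trans (e.trans toLinAlgEquiv')).eq_linearEquivConjAlgEquiv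
  let S : (Module.End K (ι → K))ˣ := ⟨T, T.symm, by ext; simp, by ext; simp⟩
  refine ⟨S.map LinearMap.toMatrixAlgEquiv'.toMonoidHom, fun A => toLinAlgEquiv'.injective ?_⟩
  have := AlgEquiv.congr_fun hT (toLinAlgEquiv' A)
  simp only [AlgEquiv.trans_apply, AlgEquiv.symm_apply_apply] at this
  rw [this]
  simp [S, Matrix.toLinAlgEquiv'_toMatrixAlgEquiv', LinearEquiv.conjAlgEquiv_apply,
    Module.End.mul_eq_comp, LinearMap.comp_assoc]

theorem exists_units_conj_of_mul_eq {f g : Matrix ι ι K → Matrix ι ι K} (hlin : IsLinearMap K f)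
    (hinj : Function.Injective f) (u v : (Matrix ι ι K)ˣ) (hu : f 1 = u) (hv : g 1 = v)
    (h₁ : ∀ A B, f A * g B = f (A * B) * g 1) (h₂ : ∀ A B, f A * g B = f 1 * g (A * B)) :
    ∃ S : (Matrix ι ι K)ˣ, ∀ A, f A = S * A * (↑S⁻¹ : Matrix ι ι K) * u := by
  have hg B : g B = (↑u⁻¹ : Matrix ι ι K) * f B * v := by
    have := h₂ B 1
    rw [mul_one, hu, hv] at this
    rw [mul_assoc, this, Units.inv_mul_cancel_left]
  have hmul A B : f (A * B) * (↑u⁻¹ : Matrix ι ι K)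
      = f A * (↑u⁻¹ : Matrix ι ι K) * (f B * (↑u⁻¹ : Matrix ι ι K)) := by
    have := h₁ A B
    rw [hg, hv] at this
    rw [← Units.mul_inv_cancel_right (f (A * B)) v, ← this]
    simp [mul_assoc]
  let χ : Matrix ι ι K →ₐ[K] Matrix ι ι K :=
    AlgHom.ofLinearMap (LinearMap.mulRight K (↑u⁻¹ : Matrix ι ι K) ∘ₗ IsLinearMap.mk' f hlin)
      (by simp [hu]) (by simpa using hmul)
  have hχ : Function.Injective χ := fun A B hAB =>
    hinj (by simpa [χ] using congrArg (· * (u : Matrix ι ι K)) hAB)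
  obtain ⟨S, hS⟩ := exists_units_conj_of_algEquiv
    (AlgEquiv.ofBijective χ ⟨hχ, (LinearMap.injective_iff_surjective (f := χ.toLinearMap)).mp hχ⟩)
  refine ⟨S, fun A => ?_⟩
  rw [← hS A]
  simp [χ]

end Field

section CommRing

variable {ι R : Type*} [Fintype ι] [DecidableEq ι] [CommRing R]

def PreservesTraceOfProducts {m : ℕ} (φ : Fin m → Matrix ι ι R → Matrix ι ι R) : Prop :=
  ∀ A : Fin m → Matrix ι ι R, trace (List.ofFn fun i => φ i (A i)).prod = trace (List.ofFn A).prod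

theorem trace_prod_rotate (l : List (Matrix ι ι R)) (k : ℕ) :
    trace (l.rotate k).prod = trace l.prod := by
  rw [List.rotate_eq_drop_append_take_mod, List.prod_append, trace_mul_comm, ← List.prod_append,
    List.take_append_drop]

theorem trace_prod_ofFn_add {m : ℕ} [NeZero m] (g : Fin m → Matrix ι ι R) (i : Fin m) :
    trace (List.ofFn fun j => g (j + i)).prod = trace (List.ofFn g).prod := by
  have : List.ofFn (fun j => g (j + i)) = (List.ofFn g).rotate i := by
    refine List.ext_getElem (by simp) fun j _ _ => ?_
    simp only [List.getElem_ofFn, List.getElem_rotate, List.length_ofFn]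
    congr 1
  rw [this, trace_prod_rotate]

theorem PreservesTraceOfProducts.rotate {m : ℕ} [NeZero m]
    {φ : Fin m → Matrix ι ι R → Matrix ι ι R} (h : PreservesTraceOfProducts φ) (i : Fin m) :
    PreservesTraceOfProducts fun j => φ (j + i) := fun A => by
  have hφ := trace_prod_ofFn_add (fun j => φ j (A (j - i))) i
  have hA := trace_prod_ofFn_add (fun j => A (j - i)) i
  simp only [add_sub_cancel_right] at hφ hA
  rw [hφ, hA]
  exact h _

theorem PreservesTraceOfProducts.trace_apply_zero_mul {s : ℕ}
    {φ : Fin (s + 1) → Matrix ι ι R → Matrix ι ι R} (h : PreservesTraceOfProducts φ)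
    (A : Matrix ι ι R) (T : Fin s → Matrix ι ι R) :
    trace (φ 0 A * (List.ofFn fun j => φ j.succ (T j)).prod) = trace (A * (List.ofFn T).prod) := by
  simpa [List.ofFn_succ] using h (Fin.cons A T)

theorem PreservesTraceOfProducts.trace_apply_zero_mul_apply_one_mul {s : ℕ}
    {φ : Fin (s + 2) → Matrix ι ι R → Matrix ι ι R} (h : PreservesTraceOfProducts φ)
    (A B : Matrix ι ι R) (T : Fin s → Matrix ι ι R) :
    trace (φ 0 A * φ 1 B * (List.ofFn fun j => φ j.succ.succ (T j)).prod)
      = trace (A * B * (List.ofFn T).prod) := by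
  simpa [List.ofFn_succ, mul_assoc] using h (Fin.cons A (Fin.cons B T))

theorem preservesTraceOfProducts_iff_of_eq_units_conj {s : ℕ}
    {φ : Fin (s + 1) → Matrix ι ι R → Matrix ι ι R} (N : ℕ → (Matrix ι ι R)ˣ)
    (hφ : ∀ (i : Fin (s + 1)) A, φ i A = N i * A * (↑(N ((i : ℕ) + 1))⁻¹ : Matrix ι ι R)) :
    PreservesTraceOfProducts φ ↔ N (s + 1) = N 0 := by
  have hprod A : (List.ofFn fun i => φ i (A i)).prod
      = N 0 * (List.ofFn A).prod * (↑(N (s + 1))⁻¹ : Matrix ι ι R) := by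
    simp only [hφ]
    exact List.prod_ofFn_units_mul_mul_inv N A
  simp only [PreservesTraceOfProducts, hprod]
  constructor
  · intro h
    have : (↑((N (s + 1))⁻¹ * N 0) : Matrix ι ι R) = 1 := ext_iff_trace_mul_right.2 fun X => by
      obtain ⟨A, rfl⟩ := List.surjective_prod_ofFn (s := s) X
      dsimp only
      rw [one_mul, ← h A, Units.val_mul]
      exact (trace_mul_cycle _ _ _).symm
    exact inv_mul_eq_one.1 (Units.val_eq_one.1 this)
  · intro h A
    rw [h, trace_units_conj]

-- Indexing `N` by `ℕ` lets it be built by recursion along the cycle; `N m = N 0` closes it.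
theorem exists_isUnit_conj_iff_exists_nat_units_conj {m : ℕ} [NeZero m]
    (φ : Fin m → Matrix ι ι R → Matrix ι ι R) :
    (∃ N : Fin m → Matrix ι ι R, (∀ i, IsUnit (N i)) ∧ ∀ i A, φ i A = N i * A * (N (i + 1))⁻¹) ↔
      ∃ N : ℕ → (Matrix ι ι R)ˣ, N m = N 0 ∧
        ∀ (i : Fin m) A, φ i A = N i * A * (↑(N ((i : ℕ) + 1))⁻¹ : Matrix ι ι R) := by
  constructor
  · rintro ⟨N, hN, hφ⟩
    refine ⟨fun r => (hN r).unit, by simp, fun i A => ?_⟩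
    simp [hφ, coe_units_inv]
  · rintro ⟨N, hNm, hφ⟩
    refine ⟨fun i => N i, fun i => (N i).isUnit, fun i A => ?_⟩
    have : N ((i : ℕ) + 1) = N ((i + 1 : Fin m) : ℕ) := by
      rw [Fin.val_add, Fin.val_one', Nat.add_mod_mod]
      rcases (Nat.add_one_le_of_lt i.isLt).lt_or_eq with hlt | heq
      · rw [Nat.mod_eq_of_lt hlt]
      · rw [heq, Nat.mod_self, hNm]
    rw [hφ, this, coe_units_inv]

end CommRing

variable {K ι : Type*} [Field K] [Fintype ι] [DecidableEq ι]

theorem PreservesTraceOfProducts.isLinearMap {s : ℕ}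
    {φ : Fin (s + 2) → Matrix ι ι K → Matrix ι ι K} (h : PreservesTraceOfProducts φ)
    (i : Fin (s + 2)) : IsLinearMap K (φ i) := by
  simpa using
    isLinearMap_of_trace_mul_eq List.surjective_prod_ofFn (h.rotate i).trace_apply_zero_mul

theorem PreservesTraceOfProducts.injective {s : ℕ}
    {φ : Fin (s + 2) → Matrix ι ι K → Matrix ι ι K} (h : PreservesTraceOfProducts φ)
    (i : Fin (s + 2)) : Function.Injective (φ i) := by
  simpa using injective_of_trace_mul_eq List.surjective_prod_ofFn (h.rotate i).trace_apply_zero_mul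

theorem PreservesTraceOfProducts.surjective {s : ℕ}
    {φ : Fin (s + 2) → Matrix ι ι K → Matrix ι ι K} (h : PreservesTraceOfProducts φ)
    (i : Fin (s + 2)) : Function.Surjective (φ i) :=
  (LinearMap.injective_iff_surjective (f := IsLinearMap.mk' _ (h.isLinearMap i))).mp (h.injective i)

theorem PreservesTraceOfProducts.apply_mul_apply_add_one {s : ℕ}
    {φ : Fin (s + 3) → Matrix ι ι K → Matrix ι ι K} (h : PreservesTraceOfProducts φ)
    (i : Fin (s + 3)) (A B : Matrix ι ι K) :
    φ i A * φ (i + 1) B = φ i (A * B) * φ (i + 1) 1 ∧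
      φ i A * φ (i + 1) B = φ i 1 * φ (i + 1) (A * B) := by
  have H := (h.rotate i).trace_apply_zero_mul_apply_one_mul
  simp only [zero_add, add_comm (1 : Fin (s + 3)) i] at H
  have hspan := span_range_eq_top_of_trace_mul_eq (f := fun D => φ i D * φ (i + 1) 1)
    List.surjective_prod_ofFn fun D T => by rw [H, mul_one]
  constructor <;> refine eq_of_trace_mul_eq_of_span_eq_top hspan fun T => ?_
  · rw [H, H, mul_one]
  · rw [H, H, one_mul]

theorem PreservesTraceOfProducts.exists_nat_units_conj {s : ℕ}
    {φ : Fin (s + 3) → Matrix ι ι K → Matrix ι ι K} (h : PreservesTraceOfProducts φ) :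
    ∃ N : ℕ → (Matrix ι ι K)ˣ,
      ∀ (i : Fin (s + 3)) A, φ i A = N i * A * (↑(N ((i : ℕ) + 1))⁻¹ : Matrix ι ι K) := by
  have hb i : IsUnit (φ i 1) := isUnit_apply_one_of_mul_eq (h.surjective i) (h.surjective (i + 1))
    fun A B => (h.apply_mul_apply_add_one i A B).2
  obtain ⟨S, hS⟩ := exists_units_conj_of_mul_eq (g := φ 1) (h.isLinearMap 0) (h.injective 0)
    (hb 0).unit (hb 1).unit (hb 0).unit_spec.symm (hb 1).unit_spec.symm
    (by simpa using fun A B => (h.apply_mul_apply_add_one 0 A B).1)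
    (by simpa using fun A B => (h.apply_mul_apply_add_one 0 A B).2)
  exact exists_nat_units_conj_of_step (fun i => (hb i).unit) S hS
    fun i A => by simpa using (h.apply_mul_apply_add_one i A 1).2

end Matrix

theorem stmt3_general (m : ℕ) [NeZero m] (hm : 3 ≤ m) (n : ℕ)
    (φ : Fin m → Matrix (Fin n) (Fin n) ℂ → Matrix (Fin n) (Fin n) ℂ) :
    (∀ A : Fin m → Matrix (Fin n) (Fin n) ℂ,
      Matrix.trace (List.ofFn fun i => φ i (A i)).prod = Matrix.trace (List.ofFn A).prod)
    ↔ ∃ N : Fin m → Matrix (Fin n) (Fin n) ℂ, (∀ i, IsUnit (N i)) ∧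
        ∀ i A, φ i A = N i * A * (N (i + 1))⁻¹ := by
  rw [exists_isUnit_conj_iff_exists_nat_units_conj]
  obtain ⟨s, rfl⟩ : ∃ s, m = s + 3 := ⟨m - 3, by omega⟩
  constructor
  · intro h
    obtain ⟨N, hN⟩ := PreservesTraceOfProducts.exists_nat_units_conj h
    exact ⟨N, (preservesTraceOfProducts_iff_of_eq_units_conj N hN).1 h, hN⟩
  · rintro ⟨N, hNm, hN⟩
    exact (preservesTraceOfProducts_iff_of_eq_units_conj N hN).2 hNm

theorem stmt3 (m : ℕ) [NeZero m] (hm : 3 ≤ m) (n : ℕ) (hn : 1 ≤ n)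
    (φ : Fin m → Matrix (Fin n) (Fin n) ℂ → Matrix (Fin n) (Fin n) ℂ) :
    (∀ A : Fin m → Matrix (Fin n) (Fin n) ℂ,
      Matrix.trace (List.ofFn fun i => φ i (A i)).prod = Matrix.trace (List.ofFn A).prod)
    ↔ ∃ N : Fin m → Matrix (Fin n) (Fin n) ℂ, (∀ i, IsUnit (N i)) ∧
        ∀ i A, φ i A = N i * A * (N (i + 1))⁻¹ :=
  stmt3_general m hm n φ
end

section
/- If n > k ≥ 1 and m ≥ 2, then there do not exist linear maps φ₁,…,φ_m: M_n → M_k such that tr(φ₁(A₁)⋯φ_m(A_m)) = tr(A₁⋯A_m) for all A₁,…,A_m ∈ M_n. -/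
open Matrix

/-- Feeding `M, B, 1, …, 1` into the identity gives `tr (M B) = tr (φ₀ M · φ₁ B)`, so any `M` killed
by `φ₀` is orthogonal to every `B` for the trace form, which is nondegenerate. -/
theorem Matrix.injective_of_trace_prod_ofFn_map_eq {R ι κ : Type*} [CommRing R]
    [Fintype ι] [DecidableEq ι] [Fintype κ] [DecidableEq κ] {m : ℕ}
    (φ : Fin (m + 2) → (Matrix ι ι R →ₗ[R] Matrix κ κ R))
    (hφ : ∀ A : Fin (m + 2) → Matrix ι ι R,
      trace (List.ofFn fun i => φ i (A i)).prod = trace (List.ofFn A).prod) :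
    Function.Injective (φ 0) := by
  refine (injective_iff_map_eq_zero (φ 0)).mpr fun M hM => ?_
  refine ext_iff_trace_mul_right.mpr fun B => ?_
  have := hφ (Fin.cons M (Fin.cons B fun _ => 1))
  simpa [List.ofFn_succ, hM] using this.symm

theorem stmt7_general (n k m : ℕ) (hkn : k < n) (hm : 2 ≤ m) :
    ¬ ∃ φ : Fin m → (Matrix (Fin n) (Fin n) ℂ →ₗ[ℂ] Matrix (Fin k) (Fin k) ℂ),
        ∀ A : Fin m → Matrix (Fin n) (Fin n) ℂ,
          Matrix.trace (List.ofFn fun i => φ i (A i)).prod =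
            Matrix.trace (List.ofFn A).prod := by
  rintro ⟨φ, hφ⟩
  obtain ⟨m, rfl⟩ : ∃ m', m = m' + 2 := ⟨m - 2, by omega⟩
  have hdim := LinearMap.finrank_le_finrank_of_injective
    (Matrix.injective_of_trace_prod_ofFn_map_eq φ hφ)
  simp only [Module.finrank_matrix, Module.finrank_self, Fintype.card_fin, mul_one] at hdim
  exact absurd hdim (Nat.not_le.mpr (Nat.mul_self_lt_mul_self hkn))

theorem stmt7 (n k m : ℕ) (hk : 1 ≤ k) (hkn : k < n) (hm : 2 ≤ m) :
    ¬ ∃ φ : Fin m → (Matrix (Fin n) (Fin n) ℂ →ₗ[ℂ] Matrix (Fin k) (Fin k) ℂ),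
        ∀ A : Fin m → Matrix (Fin n) (Fin n) ℂ,
          Matrix.trace (List.ofFn fun i => φ i (A i)).prod =
            Matrix.trace (List.ofFn A).prod :=
  stmt7_general n k m hkn hm
end

section
/- Suppose n ≤ k and linear maps φ₁, φ₂: M_n → M_k satisfy tr(φ₁(A)φ₂(B)) = tr(AB) for all A, B ∈ M_n. Then there exist linear bijections φ̃₁, φ̃₂: M_k → M_k such that tr(φ̃₁(Ã)φ̃₂(B̃)) = tr(Ã B̃) for all Ã, B̃ ∈ M_k, and φ̃ᵢ(A ⊕ 0_{k−n}) = φᵢ(A) for all A ∈ M_n and i = 1, 2. -/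
/-!
Let `B(X, Y) = tr(XY)` on `M_k` and `e : A ↦ A ⊕ 0` the block embedding, which is multiplicative
and trace preserving, so `B(e A, e B) = tr(AB)` and the hypothesis reads
`B(φ₁ A, φ₂ B) = B(e A, e B)`, with `B` nondegenerate on `M_k` and on `e(M_n)`.
With `T₀ X = B(X, e ·)` and `T X = B(X, φ₂ ·)`, both `M_k → M_n^*`, one has `T ∘ φ₁ = T₀ ∘ e`
bijective, so `M_k = e(M_n) ⊕ ker T₀ = φ₁(M_n) ⊕ ker T`; an automorphism `Φ₁` sending
`e A ↦ φ₁ A` and `ker T₀ ≅ ker T` satisfies `T ∘ Φ₁ = T₀`. Then `Φ₂ := (Φ₁^*)⁻¹` (adjoint for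
`B`) preserves the pairing, and `T ∘ Φ₁ = T₀` says exactly that `Φ₂ (e A) = φ₂ A`.
-/

open Matrix

/-- The embedding `A ↦ A ⊕ 0_{k-n}` of `n×n` matrices into `k×k` matrices. -/
def embedBlock (n k : ℕ) (A : Matrix (Fin n) (Fin n) ℂ) : Matrix (Fin k) (Fin k) ℂ :=
  Matrix.of fun p q =>
    if hp : (p : ℕ) < n then if hq : (q : ℕ) < n then A ⟨p, hp⟩ ⟨q, hq⟩ else 0 else 0

open LinearMap

section LinearAlgebra

variable {K U V W : Type*} [Field K] [AddCommGroup U] [Module K U] [AddCommGroup V] [Module K V]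
  [AddCommGroup W] [Module K W] [FiniteDimensional K V]

theorem finrank_ker_add_finrank_of_surjective {T : V →ₗ[K] W} (hT : Function.Surjective T) :
    Module.finrank K (ker T) + Module.finrank K W = Module.finrank K V := by
  rw [← finrank_range_add_finrank_ker T, range_eq_top.mpr hT, finrank_top, add_comm]

theorem exists_linearEquiv_comp_eq_of_bijective (e f : U →ₗ[K] V) (T₀ T : V →ₗ[K] W)
    (hTf : T ∘ₗ f = T₀ ∘ₗ e) (hP : Function.Bijective (T₀ ∘ₗ e)) :
    ∃ F : V ≃ₗ[K] V, F.toLinearMap ∘ₗ e = f ∧ T ∘ₗ F.toLinearMap = T₀ := by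
  let P := LinearEquiv.ofBijective _ hP
  have hT₀P : ∀ w, T₀ (e (P.symm w)) = w := P.apply_symm_apply
  have hTP : ∀ w, T (f (P.symm w)) = w := fun w => by
    rw [← LinearMap.comp_apply T f, hTf]; exact hT₀P w
  have hT₀ : Function.Surjective T₀ := fun w => ⟨_, hT₀P w⟩
  have hT : Function.Surjective T := fun w => ⟨_, hTP w⟩
  let j : ker T₀ ≃ₗ[K] ker T := LinearEquiv.ofFinrankEq _ _ <| by
    have h₀ := finrank_ker_add_finrank_of_surjective hT₀
    have h := finrank_ker_add_finrank_of_surjective hT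
    omega
  -- the projection onto `ker T₀` along `range e`
  let q : V →ₗ[K] ker T₀ := (LinearMap.id - e ∘ₗ P.symm.toLinearMap ∘ₗ T₀).codRestrict _
    fun v => by simp [hT₀P]
  let F : V →ₗ[K] V := f ∘ₗ P.symm.toLinearMap ∘ₗ T₀ + (ker T).subtype ∘ₗ j.toLinearMap ∘ₗ q
  have hF : ∀ v, F v = f (P.symm (T₀ v)) + j (q v) := fun _ => rfl
  have hPe : ∀ a, P.symm (T₀ (e a)) = a := P.symm_apply_apply
  have hq : ∀ v, (q v : V) = v - e (P.symm (T₀ v)) := fun _ => rfl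
  have hTF : ∀ v, T (F v) = T₀ v := fun v => by
    rw [hF, map_add, hTP, LinearMap.mem_ker.mp (j (q v)).2, add_zero]
  have hFe : ∀ a, F (e a) = f a := fun a => by
    have hqe : q (e a) = 0 := Subtype.ext (by rw [hq, hPe, sub_self]; rfl)
    rw [hF, hPe, hqe, map_zero, Submodule.coe_zero, add_zero]
  have hFinj : Function.Injective F := by
    refine (injective_iff_map_eq_zero F).mpr fun v hv => ?_
    have hT₀v : T₀ v = 0 := by rw [← hTF, hv, map_zero]
    have hqv : q v = 0 := j.injective <| Subtype.ext <| by
      simpa [hF, hT₀v] using hv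
    simpa [hq, hT₀v] using congrArg Subtype.val hqv
  exact ⟨LinearEquiv.ofInjectiveEndo F hFinj, LinearMap.ext hFe, LinearMap.ext hTF⟩

namespace LinearMap.BilinForm

variable {B : LinearMap.BilinForm K V}

theorem Nondegenerate.exists_linearEquiv_apply_apply_eq (hB : B.Nondegenerate) (F : V ≃ₗ[K] V) :
    ∃ G : V ≃ₗ[K] V, ∀ x y, B (F x) (G y) = B x y := by
  let D := B.flip.toDual hB.flip
  refine ⟨D ≪≫ₗ F.dualMap.symm ≪≫ₗ D.symm, fun x y => ?_⟩
  change D (D.symm (F.dualMap.symm (D y))) (F x) = D y x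
  rw [D.apply_symm_apply, ← LinearEquiv.dualMap_apply, LinearEquiv.apply_symm_apply]

theorem Nondegenerate.exists_linearEquiv_extend [FiniteDimensional K U] (hB : B.Nondegenerate)
    (e f₁ f₂ : U →ₗ[K] V) (he : (B.compl₁₂ e e).Nondegenerate)
    (hf : ∀ a b, B (f₁ a) (f₂ b) = B (e a) (e b)) :
    ∃ F₁ F₂ : V ≃ₗ[K] V, (∀ x y, B (F₁ x) (F₂ y) = B x y) ∧
      ∀ a, F₁ (e a) = f₁ a ∧ F₂ (e a) = f₂ a := by
  obtain ⟨F₁, hF₁e, hF₁⟩ := exists_linearEquiv_comp_eq_of_bijective e f₁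
    (e.dualMap ∘ₗ B) (f₂.dualMap ∘ₗ B) (LinearMap.ext fun a => LinearMap.ext fun b => hf a b)
    (toDual (B.compl₁₂ e e) he).bijective
  obtain ⟨F₂, hF₂⟩ := hB.exists_linearEquiv_apply_apply_eq F₁
  refine ⟨F₁, F₂, hF₂, fun a => ⟨LinearMap.congr_fun hF₁e a, ?_⟩⟩
  refine sub_eq_zero.mp <| hB.2 _ fun v => ?_
  obtain ⟨x, rfl⟩ := F₁.surjective v
  rw [map_sub, hF₂, sub_eq_zero]
  exact (LinearMap.congr_fun (LinearMap.congr_fun hF₁ x) a).symm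

end LinearMap.BilinForm

end LinearAlgebra

section Embed

variable {n k : ℕ}

theorem embedBlock_castLE (hnk : n ≤ k) (A : Matrix (Fin n) (Fin n) ℂ) (i j : Fin n) :
    embedBlock n k A (Fin.castLE hnk i) (Fin.castLE hnk j) = A i j := by
  simp [embedBlock]

theorem embedBlock_apply_of_notMem_range (hnk : n ≤ k) (A : Matrix (Fin n) (Fin n) ℂ) {p q : Fin k}
    (h : p ∉ Set.range (Fin.castLE hnk) ∨ q ∉ Set.range (Fin.castLE hnk)) :
    embedBlock n k A p q = 0 := by
  simp only [Fin.range_castLE, Set.mem_ofPred_eq] at h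
  rcases h with h | h <;> simp [embedBlock, h]

variable (n k) in
def embedBlockₗ : Matrix (Fin n) (Fin n) ℂ →ₗ[ℂ] Matrix (Fin k) (Fin k) ℂ where
  toFun := embedBlock n k
  map_add' A B := by
    ext p q
    by_cases hp : (p : ℕ) < n <;> by_cases hq : (q : ℕ) < n <;> simp [embedBlock, hp, hq]
  map_smul' c A := by
    ext p q
    by_cases hp : (p : ℕ) < n <;> by_cases hq : (q : ℕ) < n <;> simp [embedBlock, hp, hq]

theorem embedBlock_mul (hnk : n ≤ k) (A B : Matrix (Fin n) (Fin n) ℂ) :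
    embedBlock n k (A * B) = embedBlock n k A * embedBlock n k B := by
  ext p q
  by_cases hpq : p ∈ Set.range (Fin.castLE hnk) ∧ q ∈ Set.range (Fin.castLE hnk)
  · obtain ⟨⟨i, rfl⟩, ⟨j, rfl⟩⟩ := hpq
    rw [embedBlock_castLE, mul_apply, mul_apply]
    refine Fintype.sum_of_injective _ (Fin.castLE_injective hnk) _ _ (fun r hr => ?_) (fun l => ?_)
    · rw [embedBlock_apply_of_notMem_range hnk A (Or.inr hr), zero_mul]
    · rw [embedBlock_castLE, embedBlock_castLE]
  · rw [not_and_or] at hpq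
    rw [embedBlock_apply_of_notMem_range hnk _ hpq, mul_apply]
    refine (Finset.sum_eq_zero fun r _ => ?_).symm
    rcases hpq with hp | hq
    · rw [embedBlock_apply_of_notMem_range hnk A (Or.inl hp), zero_mul]
    · rw [embedBlock_apply_of_notMem_range hnk B (Or.inr hq), mul_zero]

theorem trace_embedBlock (hnk : n ≤ k) (A : Matrix (Fin n) (Fin n) ℂ) :
    trace (embedBlock n k A) = trace A :=
  (Fintype.sum_of_injective _ (Fin.castLE_injective hnk) _ _
    (fun _ hp => embedBlock_apply_of_notMem_range hnk A (Or.inl hp))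
    (fun i => (embedBlock_castLE hnk A i i).symm)).symm

theorem trace_embedBlock_mul_embedBlock (hnk : n ≤ k) (A B : Matrix (Fin n) (Fin n) ℂ) :
    trace (embedBlock n k A * embedBlock n k B) = trace (A * B) := by
  rw [← embedBlock_mul hnk, trace_embedBlock hnk]

end Embed

namespace Matrix

variable (R ι : Type*) [CommRing R] [Fintype ι]

def traceMulForm_s8 : LinearMap.BilinForm R (Matrix ι ι R) :=
  (LinearMap.mul R (Matrix ι ι R)).compr₂ (traceLinearMap ι R R)

@[simp] theorem traceMulForm_apply_s8 (X Y : Matrix ι ι R) : traceMulForm_s8 R ι X Y = trace (X * Y) :=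
  rfl

theorem traceMulForm_nondegenerate : (traceMulForm_s8 R ι).Nondegenerate :=
  ⟨fun X hX => ext_iff_trace_mul_right.mpr fun Y => by simpa using hX Y,
   fun Y hY => ext_iff_trace_mul_left.mpr fun X => by simpa using hY X⟩

end Matrix

theorem traceMulForm_compl₁₂_embedBlockₗ {n k : ℕ} (hnk : n ≤ k) :
    (traceMulForm_s8 ℂ (Fin k)).compl₁₂ (embedBlockₗ n k) (embedBlockₗ n k) =
      traceMulForm_s8 ℂ (Fin n) :=
  LinearMap.ext₂ (trace_embedBlock_mul_embedBlock hnk)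

theorem stmt8 (n k : ℕ) (hnk : n ≤ k)
    (φ₁ φ₂ : Matrix (Fin n) (Fin n) ℂ →ₗ[ℂ] Matrix (Fin k) (Fin k) ℂ)
    (htr : ∀ A B : Matrix (Fin n) (Fin n) ℂ,
      Matrix.trace (φ₁ A * φ₂ B) = Matrix.trace (A * B)) :
    ∃ Φ₁ Φ₂ : Matrix (Fin k) (Fin k) ℂ →ₗ[ℂ] Matrix (Fin k) (Fin k) ℂ,
      Function.Bijective Φ₁ ∧ Function.Bijective Φ₂ ∧
      (∀ X Y : Matrix (Fin k) (Fin k) ℂ,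
        Matrix.trace (Φ₁ X * Φ₂ Y) = Matrix.trace (X * Y)) ∧
      (∀ A : Matrix (Fin n) (Fin n) ℂ,
        Φ₁ (embedBlock n k A) = φ₁ A ∧ Φ₂ (embedBlock n k A) = φ₂ A) := by
  obtain ⟨Φ₁, Φ₂, hpair, hext⟩ :=
    (traceMulForm_nondegenerate ℂ (Fin k)).exists_linearEquiv_extend (embedBlockₗ n k) φ₁ φ₂
      (traceMulForm_compl₁₂_embedBlockₗ hnk ▸ traceMulForm_nondegenerate ℂ (Fin n))
      (fun A B => (htr A B).trans (trace_embedBlock_mul_embedBlock hnk A B).symm)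
  exact ⟨Φ₁, Φ₂, Φ₁.bijective, Φ₂.bijective, hpair, hext⟩
end

section
/- Suppose maps φ, ψ: P_n → P̄_n extend to linear maps on Hermitian matrices and satisfy tr(φ(A)ψ(B)) = tr(AB) for all A, B ∈ P_n, with ψ a linear bijection on H_n. Then φ(I) is invertible (hence positive definite). -/
open Matrix ComplexOrder

/-!
If `φ 1` were singular, pick `x ≠ 0` with `φ 1 *ᵥ x = 0` and a Hermitian `C` with `ψ C = x xᴴ`.
The trace identity extends additively from positive definite to Hermitian `B`, so
`tr C = tr (φ 1 * x xᴴ) = 0` and `tr (A * C) = xᴴ (φ A) x ≥ 0` for every positive definite `A`.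
Testing with `A = y yᴴ + 1` shows `C` is positive semidefinite, hence `C = 0` and `x xᴴ = ψ 0 = 0`.
-/

namespace Matrix

variable {𝕜 n : Type*} [RCLike 𝕜] [Fintype n]

theorem trace_mul_vecMulVec_self_star (M : Matrix n n 𝕜) (x : n → 𝕜) :
    (M * vecMulVec x (star x)).trace = star x ⬝ᵥ (M *ᵥ x) := by
  rw [mul_vecMulVec, trace_vecMulVec, dotProduct_comm]

variable [DecidableEq n]

theorem IsHermitian.exists_posDef_sub_posDef {B : Matrix n n 𝕜} (hB : B.IsHermitian) :
    ∃ P N : Matrix n n 𝕜, P.PosDef ∧ N.PosDef ∧ B = P - N := by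
  open scoped MatrixOrder Matrix.Norms.L2Operator in
  obtain ⟨P, N, hP, hN, rfl⟩ := hB.isSelfAdjoint.exists_nonneg_sub_nonneg
  exact ⟨P + 1, N + 1, PosDef.posSemidef_add hP.posSemidef .one,
    PosDef.posSemidef_add hN.posSemidef .one, by abel⟩

theorem IsHermitian.eq_of_forall_posDef {M : Type*} [AddCommGroup M]
    {f g : Matrix n n 𝕜 →+ M} (h : ∀ A, A.PosDef → f A = g A)
    {B : Matrix n n 𝕜} (hB : B.IsHermitian) : f B = g B := by
  obtain ⟨P, N, hP, hN, rfl⟩ := hB.exists_posDef_sub_posDef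
  rw [map_sub, map_sub, h P hP, h N hN]

theorem IsHermitian.eq_zero_of_trace_eq_zero {C : Matrix n n 𝕜} (hC : C.IsHermitian)
    (htr : C.trace = 0) (h : ∀ A : Matrix n n 𝕜, A.PosDef → 0 ≤ (A * C).trace) : C = 0 := by
  refine (PosSemidef.trace_eq_zero_iff ?_).mp htr
  refine .of_dotProduct_mulVec_nonneg hC fun y => ?_
  have := h _ (PosDef.posSemidef_add (posSemidef_vecMulVec_self_star y) .one)
  rwa [add_mul, trace_add, one_mul, htr, add_zero, trace_mul_comm,
    trace_mul_vecMulVec_self_star] at this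

end Matrix

theorem stmt13_general (n : ℕ)
    (φ ψ : Matrix (Fin n) (Fin n) ℂ →ₗ[ℝ] Matrix (Fin n) (Fin n) ℂ)
    (hφ : ∀ A, A.PosDef → (φ A).PosSemidef)
    (hψbij : Set.BijOn ψ {A : Matrix (Fin n) (Fin n) ℂ | A.IsHermitian}
      {A : Matrix (Fin n) (Fin n) ℂ | A.IsHermitian})
    (htr : ∀ A B : Matrix (Fin n) (Fin n) ℂ, A.PosDef → B.PosDef →
      Matrix.trace (φ A * ψ B) = Matrix.trace (A * B)) :
    IsUnit (φ 1) ∧ (φ 1).PosDef := by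
  suffices hdef : (φ 1).PosDef from ⟨hdef.isUnit, hdef⟩
  rw [(hφ 1 .one).posDef_iff_det_ne_zero]
  intro hdet
  obtain ⟨x, hx, hφx⟩ := exists_mulVec_eq_zero_iff.mpr hdet
  have htrH (A) (hA : A.PosDef) (B) (hB : B.IsHermitian) :
      (φ A * ψ B).trace = (A * B).trace :=
    hB.eq_of_forall_posDef
      (f := (traceAddMonoidHom _ ℂ).comp ((AddMonoidHom.mulLeft (φ A)).comp ψ.toAddMonoidHom))
      (g := (traceAddMonoidHom _ ℂ).comp (AddMonoidHom.mulLeft A)) (htr A · hA)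
  obtain ⟨C, hC, hψC⟩ := hψbij.surjOn (posSemidef_vecMulVec_self_star x).isHermitian
  have htrC : C.trace = 0 := by
    simpa [hψC, trace_mul_vecMulVec_self_star, hφx] using (htrH 1 .one C hC).symm
  have hC0 : C = 0 := hC.eq_zero_of_trace_eq_zero htrC fun A hA => by
    rw [← htrH A hA C hC, hψC, trace_mul_vecMulVec_self_star]
    exact (hφ A hA).dotProduct_mulVec_nonneg x
  have hxx : vecMulVec x (star x) = 0 := by rw [← hψC, hC0, map_zero]
  exact hx (by simpa using hxx)

theorem stmt13 (n : ℕ)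
    (φ ψ : Matrix (Fin n) (Fin n) ℂ →ₗ[ℝ] Matrix (Fin n) (Fin n) ℂ)
    (hφ : ∀ A, A.PosDef → (φ A).PosSemidef)
    (hψ : ∀ A, A.PosDef → (ψ A).PosSemidef)
    (hψbij : Set.BijOn ψ {A : Matrix (Fin n) (Fin n) ℂ | A.IsHermitian}
      {A : Matrix (Fin n) (Fin n) ℂ | A.IsHermitian})
    (htr : ∀ A B : Matrix (Fin n) (Fin n) ℂ, A.PosDef → B.PosDef →
      Matrix.trace (φ A * ψ B) = Matrix.trace (A * B)) :
    IsUnit (φ 1) ∧ (φ 1).PosDef :=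
  stmt13_general n φ ψ hφ hψbij htr
end

section
/- Two maps φ₁, φ₂: D_n → D_n satisfy tr(φ₁(A)φ₂(B)) = tr(AB) for all A, B ∈ D_n if and only if there exists an invertible matrix N ∈ M_n such that φ₁(A) = diag(N · diag⁻¹(A)) and φ₂(A) = diag(N^{-t} · diag⁻¹(A)) for all A ∈ D_n, where diag: ℂⁿ → D_n sends a vector to the diagonal matrix with those entries and diag⁻¹ is its inverse. -/
/-!
On diagonal matrices the maps become maps `f, g` of coordinate vectors, and the trace condition
reads `f u ⬝ᵥ g v = u ⬝ᵥ v`. Then the matrix `M` whose rows are the `g (Pi.single j 1)` is a left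
inverse of `f`, so `M` is invertible and `f = M⁻¹`; the same argument with the roles swapped
shows that `g` is the inverse of the matrix with rows `f (Pi.single j 1)`, which is `M⁻¹ᵀ`.
-/

open Matrix

namespace Matrix

variable {ι R : Type*} [Fintype ι] [DecidableEq ι] [CommRing R]

theorem trace_diagonal_mul_diagonal (u v : ι → R) :
    trace (diagonal u * diagonal v) = u ⬝ᵥ v := by
  rw [diagonal_mul_diagonal, trace_diagonal]
  rfl

theorem mulVec_dotProduct_transpose_inv_mulVec {N : Matrix ι ι R} (hN : IsUnit N)
    (u v : ι → R) : (N *ᵥ u) ⬝ᵥ (Nᵀ⁻¹ *ᵥ v) = u ⬝ᵥ v := by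
  have hNT : IsUnit Nᵀ.det := by rwa [det_transpose, ← isUnit_iff_isUnit_det]
  rw [← vecMul_transpose, ← dotProduct_mulVec, mulVec_mulVec, mul_nonsing_inv _ hNT,
    one_mulVec]

theorem isUnit_and_eq_inv_mulVec_of_mulVec_eq {A : Matrix ι ι R} {f : (ι → R) → ι → R}
    (hf : ∀ u, A *ᵥ f u = u) : IsUnit A ∧ ∀ u, f u = A⁻¹ *ᵥ u := by
  have hA : IsUnit A := mulVec_surjective_iff_isUnit.1 fun u => ⟨f u, hf u⟩
  refine ⟨hA, fun u => ?_⟩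
  calc f u = A⁻¹ *ᵥ (A *ᵥ f u) := by
        rw [mulVec_mulVec, nonsing_inv_mul _ ((isUnit_iff_isUnit_det A).1 hA), one_mulVec]
    _ = A⁻¹ *ᵥ u := by rw [hf]

theorem of_single_mulVec_eq_of_dotProduct_eq {f g : (ι → R) → ι → R}
    (h : ∀ u v, f u ⬝ᵥ g v = u ⬝ᵥ v) (u : ι → R) :
    of (fun j => g (Pi.single j 1)) *ᵥ f u = u := by
  funext j
  rw [mulVec, dotProduct_comm]
  exact (h u _).trans (dotProduct_single_one u j)

theorem dotProduct_eq_dotProduct_iff {f g : (ι → R) → ι → R} :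
    (∀ u v, f u ⬝ᵥ g v = u ⬝ᵥ v) ↔
      ∃ N : Matrix ι ι R, IsUnit N ∧ ∀ v, f v = N *ᵥ v ∧ g v = Nᵀ⁻¹ *ᵥ v := by
  refine ⟨fun h => ?_, fun ⟨N, hN, hfg⟩ u v => ?_⟩
  · obtain ⟨hM, hf⟩ :=
      isUnit_and_eq_inv_mulVec_of_mulVec_eq (of_single_mulVec_eq_of_dotProduct_eq h)
    obtain ⟨-, hg⟩ := isUnit_and_eq_inv_mulVec_of_mulVec_eq
      (of_single_mulVec_eq_of_dotProduct_eq (f := g) (g := f) fun u v => by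
        rw [dotProduct_comm, h, dotProduct_comm])
    set M := of fun j => g (Pi.single j 1)
    have hM' : of (fun j => f (Pi.single j 1)) = M⁻¹ᵀ := by
      ext i j
      simp only [hf, mulVec_single_one, of_apply, col_apply, transpose_apply]
    refine ⟨M⁻¹, isUnit_nonsing_inv_iff.2 hM, fun v => ⟨hf v, ?_⟩⟩
    rw [hg, hM']
  · rw [(hfg u).1, (hfg v).2, mulVec_dotProduct_transpose_inv_mulVec hN]

end Matrix

theorem stmt19 (n : ℕ)
    (φ₁ φ₂ : Matrix (Fin n) (Fin n) ℂ → Matrix (Fin n) (Fin n) ℂ)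
    (hφ₁ : ∀ v : Fin n → ℂ, ∃ w : Fin n → ℂ, φ₁ (Matrix.diagonal v) = Matrix.diagonal w)
    (hφ₂ : ∀ v : Fin n → ℂ, ∃ w : Fin n → ℂ, φ₂ (Matrix.diagonal v) = Matrix.diagonal w) :
    (∀ u v : Fin n → ℂ,
      Matrix.trace (φ₁ (Matrix.diagonal u) * φ₂ (Matrix.diagonal v)) =
        Matrix.trace (Matrix.diagonal u * Matrix.diagonal v))
    ↔ ∃ N : Matrix (Fin n) (Fin n) ℂ, IsUnit N ∧
        ∀ v : Fin n → ℂ,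
          φ₁ (Matrix.diagonal v) = Matrix.diagonal (N *ᵥ v) ∧
          φ₂ (Matrix.diagonal v) = Matrix.diagonal ((Nᵀ)⁻¹ *ᵥ v) := by
  choose f hf using hφ₁
  choose g hg using hφ₂
  simp only [hf, hg, trace_diagonal_mul_diagonal, diagonal_injective.eq_iff]
  exact dotProduct_eq_dotProduct_iff
end
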